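/- arXiv:2203.00208 — 3 statements merged into one kernel-verified Lean document; each statement's English description precedes it below -/
import Mathlib

section
/- Let $q$ not be a root of unity and let $L_{(a,b)}[\lambda]$ denote the simple $\mathcal{A}_q(2)$-module cyclically generated by an eigenvector of $K = x^a y^b$ with eigenvalue $\lambda \in \mathbb{C}^*$, for coprime positive integers $a, b$. Then $L_{(a,b)}[\lambda] \cong L_{(a',b')}[\lambda']$ if and only if $(a,b) = (a',b')$ and $\lambda' = q^k \lambda$ for some $k \in \mathbb{Z}$. -/
/-!
Write `K = X^a Y^b`. The relation gives `K X = q^(-b) X K` and `K Y = q^a Y K`, so `X` and `Y`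
move the eigenspace `W k` of `K` for the eigenvalue `q^k λ` into `W (k - b)` and `W (k + a)`. As
`q` is not a root of unity these eigenspaces are independent, and by simplicity they span the
module; `X` and `Y` are injective because their kernels are invariant.

An eigenvector of the injective operator `X^a' Y^b'`, which maps `W k` into `W (k + ab' - ba')`, has
finitely many nonzero components, indexed by a set stable under `k ↦ k + (ab' - ba')`. So
`ab' = ba'`, which for coprime pairs forces `(a', b') = (a, b)`, and the eigenvalue is some `q^k λ`.

Conversely, a monomial `X^i Y^j` with `aj - bi = -k` turns a `q^k λ`-eigenvector into a
`λ`-eigenvector, so it suffices to compare two simple modules with `λ`-eigenvectors `v₀` and `w₀`.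
The submodule of `M × M'` generated by `(v₀, w₀)` meets the `λ`-eigenspace of `K` only in the line
through `(v₀, w₀)`, since the weight-zero monomials `X^(at) Y^(bt)` act on eigenvectors of `K` by
scalars. Hence it does not contain `(0, w₀)`, so by simplicity of `M'` it is the graph of a linear
map; this map intertwines the actions and is bijective by Schur's lemma.
-/

open Module Submodule Function

section Commutation

variable {R A : Type*} [CommSemiring R] [Semiring A] [Algebra R A] {q : R} {x y : A}

theorem mul_pow_eq_smul_of_mul_eq_smul (h : x * y = q • (y * x)) (n : ℕ) :
    x * y ^ n = q ^ n • (y ^ n * x) := by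
  induction n with
  | zero => simp
  | succ n ih =>
    rw [pow_succ, ← mul_assoc, ih, smul_mul_assoc, mul_assoc, h, mul_smul_comm, smul_smul,
      ← mul_assoc, ← pow_succ, ← pow_succ]

theorem pow_mul_pow_eq_smul_of_mul_eq_smul (h : x * y = q • (y * x)) (m n : ℕ) :
    x ^ m * y ^ n = q ^ (m * n) • (y ^ n * x ^ m) := by
  induction m with
  | zero => simp
  | succ m ih =>
    rw [pow_succ', mul_assoc, ih, mul_smul_comm, ← mul_assoc, mul_pow_eq_smul_of_mul_eq_smul h,
      smul_mul_assoc, smul_smul, mul_assoc, ← pow_succ', ← pow_add, add_one_mul]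

end Commutation

theorem iSupIndep.eq_of_finsuppSum_eq {ι R M : Type*} [Ring R] [AddCommGroup M] [Module R M]
    {W : ι → Submodule R M} (hW : iSupIndep W) {f g : ι →₀ M} (hf : ∀ i, f i ∈ W i)
    (hg : ∀ i, g i ∈ W i) (h : (f.sum fun _ x ↦ x) = g.sum fun _ x ↦ x) : f = g := by
  classical
  have hzero := (iSupIndep_iff_finsetSum_eq_zero_imp_eq_zero W).mp hW (f - g).support (f - g)
    (fun i _ ↦ sub_mem (hf i) (hg i))
    (by
      change (f - g).sum (fun _ x ↦ x) = 0
      rw [Finsupp.sum_sub_index fun _ _ _ ↦ rfl, h, sub_self])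
  ext i
  by_cases hi : i ∈ (f - g).support
  · exact sub_eq_zero.mp (hzero i hi)
  · exact sub_eq_zero.mp (Finsupp.notMem_support_iff.mp hi)

theorem iSupIndep.iSup_inf_le {ι α : Type*} [CompleteLattice α] [IsModularLattice α]
    {W S : ι → α} (hW : iSupIndep W) (hSW : ∀ i, S i ≤ W i) (i : ι) :
    (⨆ j, S j) ⊓ W i ≤ S i := by
  have hrest : (⨆ j, ⨆ (_ : j ≠ i), S j) ⊓ W i = ⊥ :=
    ((hW i).symm.mono_left (iSup₂_mono fun j _ ↦ hSW j)).eq_bot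
  calc (⨆ j, S j) ⊓ W i = (S i ⊔ ⨆ j, ⨆ (_ : j ≠ i), S j) ⊓ W i := by rw [iSup_split_single S i]
    _ ≤ S i ⊔ (⨆ j, ⨆ (_ : j ≠ i), S j) ⊓ W i := sup_inf_le_assoc_of_le _ (hSW i)
    _ = S i := by rw [hrest, sup_bot_eq]

theorem exists_linearMap_forall_mem_of_graph {R M M' : Type*} [Ring R] [AddCommGroup M]
    [Module R M] [AddCommGroup M'] [Module R M'] (S : Submodule R (M × M'))
    (hinj : ∀ y, ((0 : M), y) ∈ S → y = 0) (hsurj : ∀ x, ∃ y, (x, y) ∈ S) :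
    ∃ φ : M →ₗ[R] M', ∀ x, (x, φ x) ∈ S := by
  have hmem : ∀ x, x ∈ S.toLinearPMap.domain := fun x ↦
    let ⟨y, hy⟩ := hsurj x; ⟨(x, y), hy, rfl⟩
  refine ⟨S.toLinearPMap.toFun ∘ₗ LinearMap.id.codRestrict _ hmem, fun x ↦ ?_⟩
  exact S.mem_graph_toLinearPMap (fun p hp hp1 ↦ hinj p.2 (by rwa [← hp1])) ⟨x, hmem x⟩

theorem Submodule.apply_mem_iSup_of_mapsTo {ι R M : Type*} [Semiring R] [AddCommMonoid M]
    [Module R M] {W : ι → Submodule R M} {f : M →ₗ[R] M} (g : ι → ι)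
    (h : ∀ i, ∀ x ∈ W i, f x ∈ W (g i)) {x : M} (hx : x ∈ ⨆ i, W i) : f x ∈ ⨆ i, W i :=
  (show ⨆ i, W i ≤ (⨆ i, W i).comap f from
    iSup_le fun i y hy ↦ mem_iSup_of_mem (g i) (h i y hy)) hx

theorem Module.End.exists_eq_of_mem_iSup_eigenspace {ι K V : Type*} [Field K] [AddCommGroup V]
    [Module K V] {f : End K V} {μ : ι → K} {v : V} (hv : v ∈ ⨆ i, f.eigenspace (μ i))
    (hv0 : v ≠ 0) {ν : K} (hfv : f v = ν • v) : ∃ i, μ i = ν := by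
  by_contra! hne
  have hle : ⨆ i, f.eigenspace (μ i) ≤ ⨆ c, ⨆ (_ : c ≠ ν), f.eigenspace c :=
    iSup_le fun i ↦ le_iSup₂_of_le (μ i) (hne i) le_rfl
  exact hv0 ((disjoint_def.mp (f.eigenspaces_iSupIndep ν)) v (mem_eigenspace_iff.mpr hfv) (hle hv))

theorem Nat.Coprime.eq_and_eq_of_mul_eq_mul {a b a' b' : ℕ} (ha : 0 < a) (hcop : a.Coprime b)
    (hcop' : a'.Coprime b') (h : a * b' = b * a') : a = a' ∧ b = b' := by
  have haa' : a = a' := Nat.dvd_antisymm (hcop.dvd_of_dvd_mul_left ⟨b', h.symm⟩)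
    (hcop'.dvd_of_dvd_mul_left ⟨b, by rw [mul_comm b', h, mul_comm]⟩)
  subst haa'
  exact ⟨rfl, (Nat.eq_of_mul_eq_mul_left ha (h.trans (mul_comm b a))).symm⟩

theorem Nat.Coprime.exists_mul_sub_mul_eq {a b : ℕ} (ha : 0 < a) (hb : 0 < b)
    (hcop : a.Coprime b) (n : ℤ) : ∃ i j : ℕ, (a * j - b * i : ℤ) = n := by
  obtain ⟨u, v, huv⟩ := Nat.isCoprime_iff_coprime.mpr hcop
  -- shift the Bézout solution `(j, i) = (n u, -n v)` by `t (b, a)` to make both entries nonnegative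
  set t : ℤ := |n * u| + |n * v|
  have ht : 0 ≤ t := by positivity
  have hbt : t ≤ b * t := le_mul_of_one_le_left ht (by exact_mod_cast hb)
  have hat : t ≤ a * t := le_mul_of_one_le_left ht (by exact_mod_cast ha)
  have hj : 0 ≤ n * u + b * t := by linarith [neg_abs_le (n * u), abs_nonneg (n * v)]
  have hi : 0 ≤ a * t - n * v := by linarith [le_abs_self (n * v), abs_nonneg (n * u)]
  refine ⟨(a * t - n * v).toNat, (n * u + b * t).toNat, ?_⟩
  rw [Int.toNat_of_nonneg hi, Int.toNat_of_nonneg hj]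
  linear_combination n * huv

theorem iSupIndep.eq_zero_of_shift_apply_eq_smul {R M : Type*} [Ring R] [AddCommGroup M]
    [Module R M] {W : ℤ → Submodule R M} (hW : iSupIndep W) {T : End R M} (hT : Injective T)
    {d : ℤ} (hTW : ∀ k, ∀ x ∈ W k, T x ∈ W (k + d)) {v : M} (hv : v ∈ ⨆ k, W k) (hv0 : v ≠ 0)
    {μ : R} (hTv : T v = μ • v) : d = 0 := by
  classical
  obtain ⟨f, hfW, rfl⟩ := (mem_iSup_iff_exists_finsupp W v).mp hv
  have hshift : (f.mapRange T T.map_zero).equivMapDomain (Equiv.addRight d) = μ • f := by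
    refine hW.eq_of_finsuppSum_eq (fun k ↦ ?_) (fun k ↦ (W k).smul_mem μ (hfW k)) ?_
    · simpa [sub_eq_add_neg] using hTW _ _ (hfW (k - d))
    · rw [Finsupp.sum_equivMapDomain, Finsupp.sum_mapRange_index (fun _ ↦ rfl),
        Finsupp.sum_smul_index' fun _ ↦ rfl, ← Finsupp.smul_sum, ← hTv, map_finsuppSum]
  have hcomponent : ∀ k, T (f k) = μ • f (k + d) := fun k ↦ by
    simpa using DFunLike.congr_fun hshift (k + d)
  have hstable : ∀ k ∈ f.support, k + d ∈ f.support := by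
    intro k hk
    rw [Finsupp.mem_support_iff] at hk ⊢
    intro hzero
    exact hk (hT (by rw [hcomponent, hzero, smul_zero, map_zero]))
  obtain ⟨k₀, hk₀⟩ : f.support.Nonempty :=
    Finsupp.support_nonempty_iff.mpr fun hf ↦ hv0 (by simp [hf])
  by_contra hd
  have horbit : ∀ n : ℕ, k₀ + n * d ∈ f.support := by
    intro n
    induction n with
    | zero => simpa using hk₀
    | succ n ih => simpa [add_mul, add_assoc] using hstable _ ih
  refine Set.infinite_of_injective_forall_mem (fun m n hmn ↦ ?_) horbit f.support.finite_toSet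
  simpa [hd] using hmn

namespace QuantumPlane

variable {𝕜 M : Type*} [Field 𝕜] [AddCommGroup M] [Module 𝕜 M]

def IsIrreducible (X Y : End 𝕜 M) : Prop :=
  ∀ W : Submodule 𝕜 M, (∀ w ∈ W, X w ∈ W) → (∀ w ∈ W, Y w ∈ W) → W = ⊥ ∨ W = ⊤

def weightSpace (X Y : End 𝕜 M) (a b : ℕ) (q lam : 𝕜) (k : ℤ) : Submodule 𝕜 M :=
  (X ^ a * Y ^ b).eigenspace (q ^ k * lam)

theorem iSupIndep_weightSpace (X Y : End 𝕜 M) (a b : ℕ) {q lam : 𝕜} (hq : q ≠ 0)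
    (hroot : ¬IsOfFinOrder q) (hlam : lam ≠ 0) : iSupIndep (weightSpace X Y a b q lam) := by
  refine (X ^ a * Y ^ b).eigenspaces_iSupIndep.comp fun k l hkl ↦ ?_
  have hu : ¬IsOfFinOrder (Units.mk0 q hq) := by rwa [← Units.isOfFinOrder_val]
  apply injective_zpow_iff_not_isOfFinOrder.mpr hu
  simpa [Units.ext_iff, hlam] using hkl

theorem mem_weightSpace_iff {X Y : End 𝕜 M} {a b : ℕ} {q lam : 𝕜} {k : ℤ} {v : M} :
    v ∈ weightSpace X Y a b q lam k ↔ (X ^ a * Y ^ b) v = (q ^ k * lam) • v :=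
  End.mem_eigenspace_iff

theorem mem_weightSpace_zero_iff {X Y : End 𝕜 M} {a b : ℕ} {q lam : 𝕜} {v : M} :
    v ∈ weightSpace X Y a b q lam 0 ↔ (X ^ a * Y ^ b) v = lam • v := by
  rw [mem_weightSpace_iff, zpow_zero, one_mul]

section Weights

variable {X Y : End 𝕜 M} {q : 𝕜} (hrel : X * Y = q • (Y * X)) {a b : ℕ} {lam : 𝕜}
include hrel

theorem apply_mem_weightSpace_sub (hq : q ≠ 0) {k : ℤ} {v : M}
    (hv : v ∈ weightSpace X Y a b q lam k) : X v ∈ weightSpace X Y a b q lam (k - b) := by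
  have hcomm : q ^ b • (X ^ a * Y ^ b * X) = X * (X ^ a * Y ^ b) := by
    rw [mul_assoc, ← mul_smul_comm, ← mul_pow_eq_smul_of_mul_eq_smul hrel, ← mul_assoc,
      ← pow_succ, pow_succ', mul_assoc]
  rw [mem_weightSpace_iff] at hv ⊢
  have hcomm_v : q ^ b • (X ^ a * Y ^ b) (X v) = (q ^ k * lam) • X v := by
    rw [← End.mul_apply, ← LinearMap.smul_apply, hcomm, End.mul_apply, hv, map_smul]
  rw [← inv_smul_smul₀ (pow_ne_zero b hq) ((X ^ a * Y ^ b) (X v)), hcomm_v, smul_smul,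
    zpow_sub₀ hq, zpow_natCast, div_eq_mul_inv]
  ring_nf

theorem apply_mem_weightSpace_add (hq : q ≠ 0) {k : ℤ} {v : M}
    (hv : v ∈ weightSpace X Y a b q lam k) : Y v ∈ weightSpace X Y a b q lam (k + a) := by
  have hcomm : X ^ a * Y ^ b * Y = q ^ a • (Y * (X ^ a * Y ^ b)) := by
    have h := pow_mul_pow_eq_smul_of_mul_eq_smul hrel a 1
    rw [pow_one, mul_one] at h
    rw [mul_assoc, ← pow_succ, pow_succ', ← mul_assoc, h, smul_mul_assoc, mul_assoc]
  rw [mem_weightSpace_iff] at hv ⊢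
  rw [← End.mul_apply, hcomm, LinearMap.smul_apply, End.mul_apply, hv, map_smul, smul_smul,
    zpow_add₀ hq, zpow_natCast]
  ring_nf

theorem pow_apply_mem_weightSpace_sub (hq : q ≠ 0) {k : ℤ} {v : M}
    (hv : v ∈ weightSpace X Y a b q lam k) (n : ℕ) :
    (X ^ n) v ∈ weightSpace X Y a b q lam (k - n * b) := by
  induction n with
  | zero => simpa using hv
  | succ n ih =>
    rw [pow_succ', End.mul_apply]
    convert apply_mem_weightSpace_sub hrel hq ih using 2
    push_cast; ring

theorem pow_apply_mem_weightSpace_add (hq : q ≠ 0) {k : ℤ} {v : M}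
    (hv : v ∈ weightSpace X Y a b q lam k) (n : ℕ) :
    (Y ^ n) v ∈ weightSpace X Y a b q lam (k + n * a) := by
  induction n with
  | zero => simpa using hv
  | succ n ih =>
    rw [pow_succ', End.mul_apply]
    convert apply_mem_weightSpace_add hrel hq ih using 2
    push_cast; ring

theorem pow_mul_pow_apply_mem_weightSpace (hq : q ≠ 0) {k : ℤ} {v : M}
    (hv : v ∈ weightSpace X Y a b q lam k) (i j : ℕ) :
    (X ^ i * Y ^ j) v ∈ weightSpace X Y a b q lam (k + (a * j - b * i)) := by
  rw [End.mul_apply]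
  convert pow_apply_mem_weightSpace_sub hrel hq (pow_apply_mem_weightSpace_add hrel hq hv j) i
    using 2
  ring

theorem pow_mul_pow_mul_apply_mem_span (hq : q ≠ 0) (t : ℕ) {μ : 𝕜} {u : M}
    (hu : (X ^ a * Y ^ b) u = μ • u) : (X ^ (a * t) * Y ^ (b * t)) u ∈ 𝕜 ∙ u := by
  induction t generalizing μ u with
  | zero => simp
  | succ t ih =>
    have hsplit : X ^ (a * (t + 1)) * Y ^ (b * (t + 1))
        = X ^ a * (X ^ (a * t) * Y ^ (b * t)) * Y ^ b := by
      rw [mul_add_one, mul_add_one, add_comm (a * t), pow_add, pow_add]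
      simp only [mul_assoc]
    have hYu : (X ^ a * Y ^ b) ((Y ^ b) u) = (q ^ (0 + b * a : ℤ) * μ) • (Y ^ b) u :=
      mem_weightSpace_iff.mp <|
        pow_apply_mem_weightSpace_add hrel hq (mem_weightSpace_zero_iff.mpr hu) b
    obtain ⟨c, hc⟩ := mem_span_singleton.mp (ih hYu)
    rw [hsplit, End.mul_apply, End.mul_apply, ← hc, map_smul, ← End.mul_apply, hu]
    exact smul_mem _ _ (smul_mem _ _ (mem_span_singleton_self u))

end Weights

namespace IsIrreducible

variable {X Y : End 𝕜 M} {q : 𝕜} (hM : IsIrreducible X Y) (hrel : X * Y = q • (Y * X))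
  {a b : ℕ}
include hM hrel

theorem injective_left (ha : 0 < a) (hK : X ^ a * Y ^ b ≠ 0) : Injective X := by
  rcases hM (LinearMap.ker X) (fun w hw ↦ by simp [LinearMap.mem_ker.mp hw])
      (fun w hw ↦ by
        rw [LinearMap.mem_ker, ← End.mul_apply, hrel, LinearMap.smul_apply, End.mul_apply,
          LinearMap.mem_ker.mp hw, map_zero, smul_zero]) with h | h
  · exact LinearMap.ker_eq_bot.mp h
  · rw [LinearMap.ker_eq_top] at h
    exact absurd (by rw [h, zero_pow ha.ne', zero_mul]) hK

theorem injective_right (hq : q ≠ 0) (hb : 0 < b) (hK : X ^ a * Y ^ b ≠ 0) : Injective Y := by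
  rcases hM (LinearMap.ker Y)
      (fun w hw ↦ by
        have h := congr($hrel w)
        simp only [End.mul_apply, LinearMap.smul_apply, LinearMap.mem_ker.mp hw, map_zero] at h
        exact (smul_eq_zero.mp h.symm).resolve_left hq)
      (fun w hw ↦ by simp [LinearMap.mem_ker.mp hw]) with h | h
  · exact LinearMap.ker_eq_bot.mp h
  · rw [LinearMap.ker_eq_top] at h
    exact absurd (by rw [h, zero_pow hb.ne', mul_zero]) hK

theorem injective_pow_mul_pow (hq : q ≠ 0) (ha : 0 < a) (hb : 0 < b) {lam : 𝕜} (hlam : lam ≠ 0)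
    {v₀ : M} (hv₀ : v₀ ≠ 0) (hK : (X ^ a * Y ^ b) v₀ = lam • v₀) (m n : ℕ) :
    Injective (X ^ m * Y ^ n) := by
  have hKne : X ^ a * Y ^ b ≠ 0 := fun h ↦ hv₀ (by simpa [h, hlam] using hK.symm)
  rw [End.coe_mul, End.coe_pow, End.coe_pow]
  exact ((hM.injective_left hrel ha hKne).iterate m).comp
    ((hM.injective_right hrel hq hb hKne).iterate n)

theorem iSup_weightSpace_eq_top (hq : q ≠ 0) {lam : 𝕜} {v₀ : M} (hv₀ : v₀ ≠ 0)
    (hK : (X ^ a * Y ^ b) v₀ = lam • v₀) : ⨆ k, weightSpace X Y a b q lam k = ⊤ := by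
  have hX : ∀ w ∈ ⨆ k, weightSpace X Y a b q lam k, X w ∈ ⨆ k, weightSpace X Y a b q lam k :=
    fun w hw ↦ apply_mem_iSup_of_mapsTo (f := X) (fun k : ℤ ↦ k - b)
      (fun k v hv ↦ apply_mem_weightSpace_sub hrel hq hv) hw
  have hY : ∀ w ∈ ⨆ k, weightSpace X Y a b q lam k, Y w ∈ ⨆ k, weightSpace X Y a b q lam k :=
    fun w hw ↦ apply_mem_iSup_of_mapsTo (f := Y) (fun k : ℤ ↦ k + a)
      (fun k v hv ↦ apply_mem_weightSpace_add hrel hq hv) hw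
  have hv₀W : v₀ ∈ ⨆ k, weightSpace X Y a b q lam k :=
    mem_iSup_of_mem 0 (mem_weightSpace_zero_iff.mpr hK)
  exact (hM _ hX hY).resolve_left fun h ↦ hv₀ ((mem_bot 𝕜).mp (h ▸ hv₀W))

theorem eq_and_exists_zpow_of_apply_eq_smul (hq : q ≠ 0) (hroot : ¬IsOfFinOrder q)
    {a' b' : ℕ} (ha : 0 < a) (hb : 0 < b) (hcop : a.Coprime b) (hcop' : a'.Coprime b')
    {lam lam' : 𝕜} (hlam : lam ≠ 0) {v₀ v : M} (hv₀ : v₀ ≠ 0) (hK : (X ^ a * Y ^ b) v₀ = lam • v₀)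
    (hv : v ≠ 0) (hK' : (X ^ a' * Y ^ b') v = lam' • v) :
    (a = a' ∧ b = b') ∧ ∃ k : ℤ, lam' = q ^ k * lam := by
  have hvW : v ∈ ⨆ k, weightSpace X Y a b q lam k := by
    rw [hM.iSup_weightSpace_eq_top hrel hq hv₀ hK]; exact mem_top
  have hd := (iSupIndep_weightSpace X Y a b hq hroot hlam).eq_zero_of_shift_apply_eq_smul
    (hM.injective_pow_mul_pow hrel hq ha hb hlam hv₀ hK a' b')
    (fun k x hx ↦ pow_mul_pow_apply_mem_weightSpace hrel hq hx a' b') hvW hv hK'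
  obtain ⟨rfl, rfl⟩ := hcop.eq_and_eq_of_mul_eq_mul ha hcop' (by linarith)
  obtain ⟨k, hk⟩ := End.exists_eq_of_mem_iSup_eigenspace hvW hv hK'
  exact ⟨⟨rfl, rfl⟩, k, hk.symm⟩

end IsIrreducible

/-- Under `X * Y = q • (Y * X)` with `q ≠ 0`, this is the submodule generated by `u`. -/
def cyclicSpan (X Y : End 𝕜 M) (u : M) : Submodule 𝕜 M :=
  span 𝕜 (Set.range fun p : ℕ × ℕ ↦ (X ^ p.1 * Y ^ p.2) u)

section Cyclic

variable {X Y : End 𝕜 M} {q : 𝕜} (hrel : X * Y = q • (Y * X)) {u : M}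

theorem mem_cyclicSpan_self : u ∈ cyclicSpan X Y u :=
  subset_span ⟨(0, 0), by simp⟩

theorem apply_mem_cyclicSpan_left {w : M} (hw : w ∈ cyclicSpan X Y u) :
    X w ∈ cyclicSpan X Y u := by
  refine (span_le.mpr ?_ : cyclicSpan X Y u ≤ (cyclicSpan X Y u).comap X) hw
  rintro _ ⟨⟨i, j⟩, rfl⟩
  rw [SetLike.mem_coe, mem_comap, ← End.mul_apply, ← mul_assoc, ← pow_succ']
  exact subset_span ⟨(i + 1, j), rfl⟩

include hrel in
theorem apply_mem_cyclicSpan_right (hq : q ≠ 0) {w : M} (hw : w ∈ cyclicSpan X Y u) :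
    Y w ∈ cyclicSpan X Y u := by
  refine (span_le.mpr ?_ : cyclicSpan X Y u ≤ (cyclicSpan X Y u).comap Y) hw
  rintro _ ⟨⟨i, j⟩, rfl⟩
  have h : Y * (X ^ i * Y ^ j) = (q ^ i)⁻¹ • (X ^ i * Y ^ (j + 1)) := by
    have hXY := pow_mul_pow_eq_smul_of_mul_eq_smul hrel i 1
    rw [pow_one, mul_one] at hXY
    rw [← mul_assoc, pow_succ', ← mul_assoc, hXY, smul_mul_assoc, smul_smul,
      inv_mul_cancel₀ (pow_ne_zero i hq), one_smul]
  rw [SetLike.mem_coe, mem_comap, ← End.mul_apply, h, LinearMap.smul_apply]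
  exact smul_mem _ _ (subset_span ⟨(i, j + 1), rfl⟩)

include hrel in
theorem cyclicSpan_inf_weightSpace_zero_le (hq : q ≠ 0) (hroot : ¬IsOfFinOrder q) {a b : ℕ}
    (ha : 0 < a) (hcop : a.Coprime b) {lam : 𝕜} (hlam : lam ≠ 0)
    (hu : (X ^ a * Y ^ b) u = lam • u) :
    cyclicSpan X Y u ⊓ weightSpace X Y a b q lam 0 ≤ 𝕜 ∙ u := by
  let S : ℤ → Submodule 𝕜 M := fun k ↦
    span 𝕜 ((fun p : ℕ × ℕ ↦ (X ^ p.1 * Y ^ p.2) u) '' {p | (a * p.2 - b * p.1 : ℤ) = k})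
  have hSW : ∀ k, S k ≤ weightSpace X Y a b q lam k := by
    refine fun k ↦ span_le.mpr ?_
    rintro _ ⟨⟨i, j⟩, hk, rfl⟩
    have h := pow_mul_pow_apply_mem_weightSpace hrel hq (mem_weightSpace_zero_iff.mpr hu) i j
    simp only [Set.mem_ofPred_eq] at hk
    rwa [zero_add, hk] at h
  have hS0 : S 0 ≤ 𝕜 ∙ u := by
    refine span_le.mpr ?_
    rintro _ ⟨⟨i, j⟩, hij, rfl⟩
    have hij : a * j = b * i := by
      simp only [Set.mem_ofPred_eq, sub_eq_zero] at hij
      exact_mod_cast hij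
    obtain ⟨t, rfl⟩ : a ∣ i := hcop.dvd_of_dvd_mul_left ⟨j, hij.symm⟩
    obtain rfl : j = b * t := Nat.eq_of_mul_eq_mul_left ha (by rw [hij]; ring)
    exact pow_mul_pow_mul_apply_mem_span hrel hq t hu
  have hcyc : cyclicSpan X Y u ≤ ⨆ k, S k := by
    refine span_le.mpr ?_
    rintro _ ⟨⟨i, j⟩, rfl⟩
    exact mem_iSup_of_mem (a * j - b * i : ℤ) (subset_span ⟨(i, j), rfl, rfl⟩)
  calc cyclicSpan X Y u ⊓ weightSpace X Y a b q lam 0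
      ≤ (⨆ k, S k) ⊓ weightSpace X Y a b q lam 0 := inf_le_inf_right _ hcyc
    _ ≤ S 0 := (iSupIndep_weightSpace X Y a b hq hroot hlam).iSup_inf_le hSW 0
    _ ≤ 𝕜 ∙ u := hS0

end Cyclic

section TwoModules

variable {M' : Type*} [AddCommGroup M'] [Module 𝕜 M'] {X Y : End 𝕜 M} {X' Y' : End 𝕜 M'}

theorem pow_mul_pow_apply_of_intertwining {φ : M →ₗ[𝕜] M'} (hX : ∀ m, φ (X m) = X' (φ m))
    (hY : ∀ m, φ (Y m) = Y' (φ m)) (i j : ℕ) (x : M) :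
    φ ((X ^ i * Y ^ j) x) = (X' ^ i * Y' ^ j) (φ x) := by
  have hpow : ∀ {A : End 𝕜 M} {A' : End 𝕜 M'}, (∀ m, φ (A m) = A' (φ m)) →
      ∀ n m, φ ((A ^ n) m) = (A' ^ n) (φ m) := fun h n ↦
    LinearMap.congr_fun (End.commute_pow_left_of_commute (LinearMap.ext fun m ↦ (h m).symm) n).symm
  rw [End.mul_apply, End.mul_apply, hpow hX, hpow hY]

theorem IsIrreducible.bijective_of_intertwining (hM : IsIrreducible X Y)
    (hM' : IsIrreducible X' Y') {φ : M →ₗ[𝕜] M'} (hX : ∀ m, φ (X m) = X' (φ m))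
    (hY : ∀ m, φ (Y m) = Y' (φ m)) (hφ : φ ≠ 0) : Bijective φ := by
  constructor
  · refine LinearMap.ker_eq_bot.mp ((hM _ ?_ ?_).resolve_right (hφ ∘ LinearMap.ker_eq_top.mp))
    all_goals intro w hw; simp [LinearMap.mem_ker.mp hw, hX, hY]
  · refine LinearMap.range_eq_top.mp ((hM' _ ?_ ?_).resolve_left (hφ ∘ LinearMap.range_eq_bot.mp))
    · rintro _ ⟨m, rfl⟩; exact ⟨X m, hX m⟩
    · rintro _ ⟨m, rfl⟩; exact ⟨Y m, hY m⟩

theorem intertwining_of_forall_mem_graph {S : Submodule 𝕜 (M × M')}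
    (hinj : ∀ y, ((0 : M), y) ∈ S → y = 0) {A : End 𝕜 M} {A' : End 𝕜 M'}
    (hS : ∀ s ∈ S, (A s.1, A' s.2) ∈ S) {φ : M →ₗ[𝕜] M'} (hφ : ∀ x, (x, φ x) ∈ S) (x : M) :
    φ (A x) = A' (φ x) := by
  have h := sub_mem (hφ (A x)) (hS _ (hφ x))
  rw [Prod.mk_sub_mk, sub_self] at h
  exact sub_eq_zero.mp (hinj _ h)

theorem exists_intertwining_of_graph (hM : IsIrreducible X Y) (hM' : IsIrreducible X' Y')
    {S : Submodule 𝕜 (M × M')} (hSX : ∀ s ∈ S, (X s.1, X' s.2) ∈ S)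
    (hSY : ∀ s ∈ S, (Y s.1, Y' s.2) ∈ S) {v₀ : M} {w₀ : M'} (hv₀ : v₀ ≠ 0) (hS : (v₀, w₀) ∈ S)
    (hw₀ : ((0 : M), w₀) ∉ S) :
    ∃ φ : M →ₗ[𝕜] M', (∀ m, φ (X m) = X' (φ m)) ∧ (∀ m, φ (Y m) = Y' (φ m)) ∧ φ v₀ = w₀ := by
  have hinj : ∀ y, ((0 : M), y) ∈ S → y = 0 := by
    have h := (hM' (S.comap (LinearMap.inr 𝕜 M M')) (fun y hy ↦ by simpa using hSX _ hy)
      (fun y hy ↦ by simpa using hSY _ hy)).resolve_right fun h ↦ hw₀ (by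
        simpa using (h ▸ mem_top : w₀ ∈ S.comap (LinearMap.inr 𝕜 M M')))
    intro y hy
    simpa using (h ▸ hy : y ∈ (⊥ : Submodule 𝕜 M'))
  have hsurj : ∀ x, ∃ y, (x, y) ∈ S := by
    have hv₀S : v₀ ∈ S.map (LinearMap.fst 𝕜 M M') := mem_map_of_mem hS
    have h := (hM (S.map (LinearMap.fst 𝕜 M M'))
      (by rintro _ ⟨s, hs, rfl⟩; exact ⟨_, hSX s hs, rfl⟩)
      (by rintro _ ⟨s, hs, rfl⟩; exact ⟨_, hSY s hs, rfl⟩)).resolve_left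
      fun h ↦ hv₀ ((mem_bot 𝕜).mp (h ▸ hv₀S))
    intro x
    obtain ⟨s, hs, rfl⟩ := h ▸ mem_top (x := x)
    exact ⟨s.2, hs⟩
  obtain ⟨φ, hφ⟩ := exists_linearMap_forall_mem_of_graph S hinj hsurj
  refine ⟨φ, intertwining_of_forall_mem_graph hinj hSX hφ,
    intertwining_of_forall_mem_graph hinj hSY hφ, ?_⟩
  have h := sub_mem (hφ v₀) hS
  rw [Prod.mk_sub_mk, sub_self] at h
  exact sub_eq_zero.mp (hinj _ h)

variable {q : 𝕜} {a b : ℕ} {lam : 𝕜}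

/-- The graph of the intertwiner is the submodule of `M × M'` generated by `(v₀, w₀)`: it is a
graph because the `lam`-eigenspace of `X ^ a * Y ^ b` in that submodule is a line. -/
theorem exists_intertwining_linearMap (hq : q ≠ 0) (hroot : ¬IsOfFinOrder q) (ha : 0 < a)
    (hcop : a.Coprime b) (hlam : lam ≠ 0) (hrel : X * Y = q • (Y * X))
    (hrel' : X' * Y' = q • (Y' * X')) (hM : IsIrreducible X Y) (hM' : IsIrreducible X' Y')
    {v₀ : M} (hv₀ : v₀ ≠ 0) (hK : (X ^ a * Y ^ b) v₀ = lam • v₀) {w₀ : M'} (hw₀ : w₀ ≠ 0)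
    (hK' : (X' ^ a * Y' ^ b) w₀ = lam • w₀) :
    ∃ φ : M →ₗ[𝕜] M', (∀ m, φ (X m) = X' (φ m)) ∧ (∀ m, φ (Y m) = Y' (φ m)) ∧ φ v₀ = w₀ := by
  let XN := LinearMap.prodMapAlgHom 𝕜 M M' (X, X')
  let YN := LinearMap.prodMapAlgHom 𝕜 M M' (Y, Y')
  have hrelN : XN * YN = q • (YN * XN) := by
    simp only [XN, YN, ← map_mul, ← map_smul, Prod.mk_mul_mk, Prod.smul_mk, hrel, hrel']
  have hKN : ∀ x y, (XN ^ a * YN ^ b) (x, y) = ((X ^ a * Y ^ b) x, (X' ^ a * Y' ^ b) y) := by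
    simp [XN, YN, ← map_pow, ← map_mul]
  refine exists_intertwining_of_graph hM hM' (S := cyclicSpan XN YN (v₀, w₀))
    (fun s hs ↦ apply_mem_cyclicSpan_left hs) (fun s hs ↦ apply_mem_cyclicSpan_right hrelN hq hs)
    hv₀ mem_cyclicSpan_self fun hw₀S ↦ ?_
  have hw₀K : ((0 : M), w₀) ∈ weightSpace XN YN a b q lam 0 := by
    simp [mem_weightSpace_zero_iff, hKN, hK']
  obtain ⟨c, hc⟩ := mem_span_singleton.mp <| cyclicSpan_inf_weightSpace_zero_le hrelN hq hroot ha
    hcop hlam (by rw [hKN, hK, hK', Prod.smul_mk]) ⟨hw₀S, hw₀K⟩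
  simp only [Prod.smul_mk, Prod.mk.injEq, smul_eq_zero, hv₀, or_false] at hc
  exact hw₀ (by rw [← hc.2, hc.1, zero_smul])

theorem exists_intertwining_equiv (hq : q ≠ 0) (hroot : ¬IsOfFinOrder q) (ha : 0 < a)
    (hcop : a.Coprime b) (hlam : lam ≠ 0) (hrel : X * Y = q • (Y * X))
    (hrel' : X' * Y' = q • (Y' * X')) (hM : IsIrreducible X Y) (hM' : IsIrreducible X' Y')
    {v₀ : M} (hv₀ : v₀ ≠ 0) (hK : (X ^ a * Y ^ b) v₀ = lam • v₀) {w₀ : M'} (hw₀ : w₀ ≠ 0)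
    (hK' : (X' ^ a * Y' ^ b) w₀ = lam • w₀) :
    ∃ e : M ≃ₗ[𝕜] M', (∀ m, e (X m) = X' (e m)) ∧ (∀ m, e (Y m) = Y' (e m)) := by
  obtain ⟨φ, hX, hY, hφ⟩ := exists_intertwining_linearMap hq hroot ha hcop hlam hrel hrel' hM hM'
    hv₀ hK hw₀ hK'
  have hφ0 : φ ≠ 0 := fun h ↦ hw₀ (by rw [← hφ, h, LinearMap.zero_apply])
  exact ⟨.ofBijective φ (hM.bijective_of_intertwining hM' hX hY hφ0), hX, hY⟩

end TwoModules

end QuantumPlane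

open QuantumPlane

theorem simple_modules_iso_iff_general (q : ℂ) (hq : q ≠ 0)
    (hroot : ∀ k : ℕ, q ^ (k + 1) ≠ 1)
    (a b a' b' : ℕ) (ha : 0 < a) (hb : 0 < b)
    (hcop : Nat.Coprime a b) (hcop' : Nat.Coprime a' b')
    (M : Type*) [AddCommGroup M] [Module ℂ M]
    (X Y : M →ₗ[ℂ] M) (hrel : X ∘ₗ Y = q • (Y ∘ₗ X))
    (hsimple : ∀ W : Submodule ℂ M,
      (∀ w ∈ W, X w ∈ W) → (∀ w ∈ W, Y w ∈ W) → W = ⊥ ∨ W = ⊤)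
    (v₀ : M) (hv₀ : v₀ ≠ 0) (lam : ℂ) (hlam : lam ≠ 0)
    (hK : ((X ^ a) ∘ₗ (Y ^ b)) v₀ = lam • v₀)
    (M' : Type*) [AddCommGroup M'] [Module ℂ M']
    (X' Y' : M' →ₗ[ℂ] M') (hrel' : X' ∘ₗ Y' = q • (Y' ∘ₗ X'))
    (hsimple' : ∀ W : Submodule ℂ M',
      (∀ w ∈ W, X' w ∈ W) → (∀ w ∈ W, Y' w ∈ W) → W = ⊥ ∨ W = ⊤)
    (v₀' : M') (hv₀' : v₀' ≠ 0) (lam' : ℂ) (hlam' : lam' ≠ 0)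
    (hK' : ((X' ^ a') ∘ₗ (Y' ^ b')) v₀' = lam' • v₀') :
    (∃ e : M ≃ₗ[ℂ] M', (∀ m : M, e (X m) = X' (e m)) ∧ (∀ m : M, e (Y m) = Y' (e m)))
      ↔ ((a = a' ∧ b = b') ∧ ∃ k : ℤ, lam' = q ^ k * lam) := by
  rw [← Module.End.mul_eq_comp] at hrel hrel' hK hK'
  have hroot' : ¬IsOfFinOrder q := by
    rw [isOfFinOrder_iff_pow_eq_one]
    rintro ⟨n, hn, h⟩
    exact hroot (n - 1) (by rwa [Nat.sub_add_cancel hn])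
  constructor
  · rintro ⟨e, heX, heY⟩
    have heK := pow_mul_pow_apply_of_intertwining (φ := e.toLinearMap) heX heY a b v₀
    exact IsIrreducible.eq_and_exists_zpow_of_apply_eq_smul hsimple' hrel' hq hroot' ha hb hcop
      hcop' hlam (e.map_ne_zero_iff.mpr hv₀) (by simpa [hK] using heK.symm) hv₀' hK'
  · rintro ⟨⟨rfl, rfl⟩, k, rfl⟩
    obtain ⟨i, j, hij⟩ := hcop.exists_mul_sub_mul_eq ha hb (-k)
    have hw₀ :=
      pow_mul_pow_apply_mem_weightSpace hrel' hq (k := k) (mem_weightSpace_iff.mpr hK') i j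
    rw [hij, add_neg_cancel, mem_weightSpace_zero_iff] at hw₀
    have hinj := IsIrreducible.injective_pow_mul_pow hsimple' hrel' hq ha hb hlam' hv₀' hK' i j
    exact exists_intertwining_equiv hq hroot' ha hcop hlam hrel hrel' hsimple hsimple' hv₀ hK
      ((map_ne_zero_iff _ hinj).mpr hv₀') hw₀

/-- for `q` not a root of unity, the simple `A_q(2)`-modules
`L_(a,b)[λ]` (cyclically generated by an eigenvector of `K = x^a y^b` with
eigenvalue `λ ≠ 0`, for coprime positive `a, b`) satisfy:
`L_(a,b)[λ] ≅ L_(a',b')[λ']` iff `(a,b) = (a',b')` and `λ' = q^k λ` for some `k ∈ ℤ`. -/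
theorem simple_modules_iso_iff (q : ℂ) (hq : q ≠ 0)
    (hroot : ∀ k : ℕ, q ^ (k + 1) ≠ 1)
    (a b a' b' : ℕ) (ha : 0 < a) (hb : 0 < b) (ha' : 0 < a') (hb' : 0 < b')
    (hcop : Nat.Coprime a b) (hcop' : Nat.Coprime a' b')
    (M : Type*) [AddCommGroup M] [Module ℂ M]
    (X Y : M →ₗ[ℂ] M) (hrel : X ∘ₗ Y = q • (Y ∘ₗ X))
    (hsimple : ∀ W : Submodule ℂ M,
      (∀ w ∈ W, X w ∈ W) → (∀ w ∈ W, Y w ∈ W) → W = ⊥ ∨ W = ⊤)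
    (v₀ : M) (hv₀ : v₀ ≠ 0) (lam : ℂ) (hlam : lam ≠ 0)
    (hK : ((X ^ a) ∘ₗ (Y ^ b)) v₀ = lam • v₀)
    (M' : Type*) [AddCommGroup M'] [Module ℂ M']
    (X' Y' : M' →ₗ[ℂ] M') (hrel' : X' ∘ₗ Y' = q • (Y' ∘ₗ X'))
    (hsimple' : ∀ W : Submodule ℂ M',
      (∀ w ∈ W, X' w ∈ W) → (∀ w ∈ W, Y' w ∈ W) → W = ⊥ ∨ W = ⊤)
    (v₀' : M') (hv₀' : v₀' ≠ 0) (lam' : ℂ) (hlam' : lam' ≠ 0)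
    (hK' : ((X' ^ a') ∘ₗ (Y' ^ b')) v₀' = lam' • v₀') :
    (∃ e : M ≃ₗ[ℂ] M', (∀ m : M, e (X m) = X' (e m)) ∧ (∀ m : M, e (Y m) = Y' (e m)))
      ↔ ((a = a' ∧ b = b') ∧ ∃ k : ℤ, lam' = q ^ k * lam) :=
  simple_modules_iso_iff_general q hq hroot a b a' b' ha hb hcop hcop' M X Y hrel hsimple v₀ hv₀ lam
    hlam hK M' X' Y' hrel' hsimple' v₀' hv₀' lam' hlam' hK'
end

section
/- Let $q$ not be a root of unity and let $\underline{c} = (c_1, c_2) \in (\mathbb{C}^*)^2$. Let $\tau_{\underline{c}}$ be the automorphism of $\mathcal{A}_q(2)$ with $\tau_{\underline{c}}(x) = c_1 x$, $\tau_{\underline{c}}(y) = c_2 y$. Then the twist of the simple module $L_{(a,b)}[1]$ by $\tau_{\underline{c}}$ (where $u \star w := \tau_{\underline{c}}(u) w$) is isomorphic to $L_{(a,b)}[c_1^a c_2^b]$. -/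
/-!
Twisting by `τ_c` keeps the module simple and makes `v₀` an eigenvector of `K = x^a y^b` with
eigenvalue `λ = c₁^a c₂^b`, so it suffices to show that two simple modules `M`, `M'` with
`K`-eigenvectors `v₀`, `v₀'` of the same eigenvalue `λ ≠ 0` are isomorphic.
The submodule `N ⊆ M × M'` generated by `(v₀, v₀')` is spanned by the vectors
`x^i y^j (v₀, v₀')`, which are `K`-eigenvectors of eigenvalue `q^(aj - bi) λ`. As `q` is not a root
of unity and `gcd(a, b) = 1`, this eigenvalue is `λ` only for `(i, j) = t (a, b)`, and then
`x^i y^j` is a multiple of `K^t`. So the `λ`-eigenspace of `N` is the line through `(v₀, v₀')`,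
and `N` contains neither `(v₀, 0)` nor `(0, v₀')`. By simplicity `N` then meets `M × 0` and
`0 × M'` trivially and projects onto both factors: it is the graph of an isomorphism `M ≅ M'`.
-/

open Module

section

variable {k A : Type*} [CommSemiring k] [Semiring A] [Algebra k A]

def QCommute (q : k) (x y : A) : Prop :=
  x * y = q • (y * x)

namespace QCommute

variable {q : k} {x y : A}

theorem eq (h : QCommute q x y) : x * y = q • (y * x) :=
  h

theorem pow_right (h : QCommute q x y) (j : ℕ) : QCommute (q ^ j) x (y ^ j) := by
  induction j with
  | zero => simp [QCommute]
  | succ j ih =>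
    rw [QCommute, pow_succ, ← mul_assoc, ih.eq, smul_mul_assoc, mul_assoc, h.eq, mul_smul_comm,
      smul_smul, ← mul_assoc, pow_succ]

theorem pow_pow (h : QCommute q x y) (i j : ℕ) : QCommute (q ^ (i * j)) (x ^ i) (y ^ j) := by
  induction i with
  | zero => simp [QCommute]
  | succ i ih =>
    rw [QCommute, pow_succ', mul_assoc, ih.eq, mul_smul_comm, ← mul_assoc, (h.pow_right j).eq,
      smul_mul_assoc, smul_smul, mul_assoc, ← pow_succ', ← pow_add, add_one_mul, add_comm (i * j)]

theorem smul_left (h : QCommute q x y) (c : k) : QCommute q (c • x) y := by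
  rw [QCommute, smul_mul_assoc, h.eq, mul_smul_comm, smul_comm]

theorem smul_right (h : QCommute q x y) (c : k) : QCommute q x (c • y) := by
  rw [QCommute, mul_smul_comm, h.eq, smul_mul_assoc, smul_comm]

theorem smul_pow_mul_pow_mul_comm (h : QCommute q x y) (a b i j : ℕ) :
    q ^ (b * i) • (x ^ a * y ^ b * (x ^ i * y ^ j)) =
      q ^ (a * j) • (x ^ i * y ^ j * (x ^ a * y ^ b)) := by
  have hl : q ^ (b * i) • (x ^ a * y ^ b * (x ^ i * y ^ j)) = x ^ (a + i) * y ^ (b + j) := by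
    rw [mul_assoc, ← mul_assoc (y ^ b), ← mul_smul_comm, ← smul_mul_assoc, mul_comm b,
      ← (h.pow_pow i b).eq, ← mul_assoc, ← mul_assoc, ← pow_add, mul_assoc, ← pow_add]
  have hr : q ^ (a * j) • (x ^ i * y ^ j * (x ^ a * y ^ b)) = x ^ (a + i) * y ^ (b + j) := by
    rw [mul_assoc, ← mul_assoc (y ^ j), ← mul_smul_comm, ← smul_mul_assoc, ← (h.pow_pow a j).eq,
      ← mul_assoc, ← mul_assoc, ← pow_add, mul_assoc, ← pow_add, add_comm i, add_comm j]
  rw [hl, hr]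

theorem exists_pow_mul_pow_eq_smul_pow (h : QCommute q x y) (a b t : ℕ) :
    ∃ c : k, x ^ (t * a) * y ^ (t * b) = c • (x ^ a * y ^ b) ^ t := by
  induction t with
  | zero => exact ⟨1, by simp⟩
  | succ t ih =>
    obtain ⟨c, hc⟩ := ih
    refine ⟨q ^ (a * (t * b)) * c, ?_⟩
    calc x ^ ((t + 1) * a) * y ^ ((t + 1) * b)
        = x ^ (t * a) * (x ^ a * y ^ (t * b)) * y ^ b := by
          rw [add_one_mul, add_one_mul, pow_add, pow_add, mul_assoc, mul_assoc, mul_assoc]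
      _ = q ^ (a * (t * b)) • (x ^ (t * a) * y ^ (t * b) * (x ^ a * y ^ b)) := by
          rw [(h.pow_pow a (t * b)).eq, mul_smul_comm, smul_mul_assoc, mul_assoc, mul_assoc,
            mul_assoc]
      _ = (q ^ (a * (t * b)) * c) • (x ^ a * y ^ b) ^ (t + 1) := by
          rw [hc, smul_mul_assoc, smul_smul, pow_succ]

end QCommute

end

theorem Nat.Coprime.exists_eq_mul_of_mul_eq {a b i j : ℕ} (hab : a.Coprime b)
    (h : a * j = b * i) : ∃ t, i = t * a ∧ j = t * b := by
  obtain ⟨t, rfl⟩ : a ∣ i := hab.dvd_of_dvd_mul_left ⟨j, by rw [h, mul_comm]⟩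
  rcases Nat.eq_zero_or_pos a with rfl | ha
  · exact ⟨j, by simp, by simp [(Nat.coprime_zero_left b).mp hab]⟩
  · exact ⟨t, mul_comm _ _, Nat.eq_of_mul_eq_mul_left ha (by rw [h]; ring)⟩

theorem pow_injective_of_not_isOfFinOrder {M₀ : Type*} [GroupWithZero M₀] {q : M₀} (hq : q ≠ 0)
    (hq' : ¬IsOfFinOrder q) : Function.Injective (q ^ · : ℕ → M₀) := by
  have hu : ¬IsOfFinOrder (Units.mk0 q hq) := by rwa [← Units.isOfFinOrder_val]
  intro m n hmn
  exact injective_pow_iff_not_isOfFinOrder.mpr hu (Units.val_injective (by simpa using hmn))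

section Modules

variable {k M M' : Type*} [Field k] [AddCommGroup M] [Module k M] [AddCommGroup M'] [Module k M']

/-- For `q ≠ 0` and `QCommute q X Y`, this is the `A_q(2)`-submodule generated by `w`. -/
def monomialSpan (X Y : End k M) (w : M) : Submodule k M :=
  Submodule.span k (Set.range fun p : ℕ × ℕ => (X ^ p.1 * Y ^ p.2) w)

section MonomialSpan

variable {q μ : k} {X Y : End k M} {w : M}

theorem self_mem_monomialSpan : w ∈ monomialSpan X Y w :=
  Submodule.subset_span ⟨(0, 0), by simp⟩

theorem monomialSpan_mem_invtSubmodule_left : monomialSpan X Y w ∈ X.invtSubmodule := by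
  refine Submodule.span_le.mpr ?_
  rintro _ ⟨⟨i, j⟩, rfl⟩
  exact Submodule.subset_span ⟨(i + 1, j), by simp [pow_succ', mul_assoc]⟩

theorem QCommute.monomialSpan_mem_invtSubmodule_right (hq : q ≠ 0) (h : QCommute q X Y) :
    monomialSpan X Y w ∈ Y.invtSubmodule := by
  refine Submodule.span_le.mpr ?_
  rintro _ ⟨⟨i, j⟩, rfl⟩
  have hYX : Y * X ^ i = (q ^ i)⁻¹ • (X ^ i * Y) := by
    have hXY : X ^ i * Y = q ^ i • (Y * X ^ i) := by simpa using (h.pow_pow i 1).eq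
    rw [hXY, smul_smul, inv_mul_cancel₀ (pow_ne_zero _ hq), one_smul]
  have hY : Y ((X ^ i * Y ^ j) w) = (q ^ i)⁻¹ • (X ^ i * Y ^ (j + 1)) w := by
    rw [← Module.End.mul_apply, ← mul_assoc, hYX, smul_mul_assoc, mul_assoc, ← pow_succ']
    rfl
  rw [SetLike.mem_coe, Submodule.mem_comap, hY]
  exact Submodule.smul_mem _ _ (Submodule.subset_span ⟨(i, j + 1), rfl⟩)

theorem QCommute.pow_mul_pow_apply_mem_eigenspace (hq : q ≠ 0) (h : QCommute q X Y) {a b : ℕ}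
    (hw : w ∈ (X ^ a * Y ^ b).eigenspace μ) (i j : ℕ) :
    (X ^ i * Y ^ j) w ∈ (X ^ a * Y ^ b).eigenspace (q ^ (a * j) / q ^ (b * i) * μ) := by
  have key := LinearMap.congr_fun (h.smul_pow_mul_pow_mul_comm a b i j) w
  rw [LinearMap.smul_apply, LinearMap.smul_apply, Module.End.mul_apply (X ^ i * Y ^ j),
    End.mem_eigenspace_iff.mp hw, map_smul, smul_smul] at key
  rw [End.mem_eigenspace_iff]
  apply smul_right_injective M (pow_ne_zero (b * i) hq)
  simp only [← Module.End.mul_apply, key, smul_smul]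
  field_simp

theorem QCommute.monomialSpan_le_sup_iSup_eigenspace (hq : q ≠ 0) (hq' : ¬IsOfFinOrder q)
    (h : QCommute q X Y) {a b : ℕ} (hab : a.Coprime b) (hμ : μ ≠ 0)
    (hw : w ∈ (X ^ a * Y ^ b).eigenspace μ) :
    monomialSpan X Y w ≤ (k ∙ w) ⊔ ⨆ (ν) (_ : ν ≠ μ), (X ^ a * Y ^ b).eigenspace ν := by
  have hpow (t : ℕ) : ((X ^ a * Y ^ b) ^ t) w = μ ^ t • w := by
    induction t with
    | zero => simp
    | succ t ih =>
      rw [pow_succ', Module.End.mul_apply, ih, map_smul, End.mem_eigenspace_iff.mp hw,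
        smul_smul, ← pow_succ]
  refine Submodule.span_le.mpr ?_
  rintro _ ⟨⟨i, j⟩, rfl⟩
  by_cases hν : q ^ (a * j) / q ^ (b * i) * μ = μ
  · have hij : a * j = b * i := by
      refine pow_injective_of_not_isOfFinOrder hq hq' ?_
      simpa [hμ, div_eq_one_iff_eq (pow_ne_zero _ hq)] using hν
    obtain ⟨t, rfl, rfl⟩ := hab.exists_eq_mul_of_mul_eq hij
    obtain ⟨c, hc⟩ := h.exists_pow_mul_pow_eq_smul_pow a b t
    refine Submodule.mem_sup_left (Submodule.mem_span_singleton.mpr ⟨c * μ ^ t, ?_⟩)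
    simp only [hc, LinearMap.smul_apply, hpow, smul_smul]
  · exact Submodule.mem_sup_right <| Submodule.mem_iSup_of_mem _ <|
      Submodule.mem_iSup_of_mem hν <| h.pow_mul_pow_apply_mem_eigenspace hq hw i j

theorem QCommute.monomialSpan_inf_eigenspace_le (hq : q ≠ 0) (hq' : ¬IsOfFinOrder q)
    (h : QCommute q X Y) {a b : ℕ} (hab : a.Coprime b) (hμ : μ ≠ 0)
    (hw : w ∈ (X ^ a * Y ^ b).eigenspace μ) :
    monomialSpan X Y w ⊓ (X ^ a * Y ^ b).eigenspace μ ≤ k ∙ w := by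
  rintro u ⟨hu, huμ⟩
  obtain ⟨v, hv, s, hs, rfl⟩ :=
    Submodule.mem_sup.mp (h.monomialSpan_le_sup_iSup_eigenspace hq hq' hab hμ hw hu)
  have hvμ : v ∈ (X ^ a * Y ^ b).eigenspace μ :=
    (Submodule.span_singleton_le_iff_mem _ _).mpr hw hv
  have hsμ : s ∈ (X ^ a * Y ^ b).eigenspace μ := by
    simpa using Submodule.sub_mem _ huμ hvμ
  have hs0 : s = 0 :=
    Submodule.disjoint_def.mp ((X ^ a * Y ^ b).eigenspaces_iSupIndep μ) s hsμ hs
  simpa [hs0] using hv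

end MonomialSpan

def IsSimplePair (X Y : End k M) : Prop :=
  ∀ W : Submodule k M, W ∈ X.invtSubmodule → W ∈ Y.invtSubmodule → W = ⊥ ∨ W = ⊤

namespace IsSimplePair

variable {X Y : End k M} {W : Submodule k M}

theorem eq_top_of_mem (h : IsSimplePair X Y) (hX : W ∈ X.invtSubmodule)
    (hY : W ∈ Y.invtSubmodule) {v : M} (hv : v ∈ W) (hv₀ : v ≠ 0) : W = ⊤ :=
  (h W hX hY).resolve_left fun hW => hv₀ (by simpa [hW] using hv)

theorem eq_bot_of_notMem (h : IsSimplePair X Y) (hX : W ∈ X.invtSubmodule)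
    (hY : W ∈ Y.invtSubmodule) {v : M} (hv : v ∉ W) : W = ⊥ :=
  (h W hX hY).resolve_right fun hW => hv (hW ▸ Submodule.mem_top)

theorem smul (h : IsSimplePair X Y) {c₁ c₂ : k} (hc₁ : c₁ ≠ 0) (hc₂ : c₂ ≠ 0) :
    IsSimplePair (c₁ • X) (c₂ • Y) := fun W hX hY =>
  h W ((End.invtSubmodule_smul X (Units.mk0 c₁ hc₁)) ▸ hX)
    ((End.invtSubmodule_smul Y (Units.mk0 c₂ hc₂)) ▸ hY)

end IsSimplePair

section Prod

variable {f : End k M} {f' : End k M'} {N : Submodule k (M × M')}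

theorem map_fst_mem_invtSubmodule (hN : N ∈ End.invtSubmodule (f.prodMap f')) :
    N.map (LinearMap.fst k M M') ∈ f.invtSubmodule := by
  rintro _ ⟨u, hu, rfl⟩
  exact ⟨_, hN hu, rfl⟩

theorem map_snd_mem_invtSubmodule (hN : N ∈ End.invtSubmodule (f.prodMap f')) :
    N.map (LinearMap.snd k M M') ∈ f'.invtSubmodule := by
  rintro _ ⟨u, hu, rfl⟩
  exact ⟨_, hN hu, rfl⟩

theorem comap_inl_mem_invtSubmodule (hN : N ∈ End.invtSubmodule (f.prodMap f')) :
    N.comap (LinearMap.inl k M M') ∈ f.invtSubmodule := fun _ hm => by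
  simpa using hN hm

theorem comap_inr_mem_invtSubmodule (hN : N ∈ End.invtSubmodule (f.prodMap f')) :
    N.comap (LinearMap.inr k M M') ∈ f'.invtSubmodule := fun _ hm => by
  simpa using hN hm

end Prod

variable {X Y : End k M} {X' Y' : End k M'}

theorem IsSimplePair.exists_linearEquiv_of_submodule_prod {N : Submodule k (M × M')}
    (h : IsSimplePair X Y) (h' : IsSimplePair X' Y') (hX : N ∈ End.invtSubmodule (X.prodMap X'))
    (hY : N ∈ End.invtSubmodule (Y.prodMap Y')) {v₀ : M} {v₀' : M'} (hv₀ : v₀ ≠ 0)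
    (hv₀' : v₀' ≠ 0) (hmem : (v₀, v₀') ∈ N) (hl : (v₀, 0) ∉ N) (hr : (0, v₀') ∉ N) :
    ∃ e : M ≃ₗ[k] M', (∀ m, e (X m) = X' (e m)) ∧ (∀ m, e (Y m) = Y' (e m)) := by
  have hinl : N.comap (LinearMap.inl k M M') = ⊥ := h.eq_bot_of_notMem
    (comap_inl_mem_invtSubmodule hX) (comap_inl_mem_invtSubmodule hY) (v := v₀) hl
  have hinr : N.comap (LinearMap.inr k M M') = ⊥ := h'.eq_bot_of_notMem
    (comap_inr_mem_invtSubmodule hX) (comap_inr_mem_invtSubmodule hY) (v := v₀') hr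
  have hfst : N.map (LinearMap.fst k M M') = ⊤ := h.eq_top_of_mem
    (map_fst_mem_invtSubmodule hX) (map_fst_mem_invtSubmodule hY) ⟨_, hmem, rfl⟩ hv₀
  have hsnd : N.map (LinearMap.snd k M M') = ⊤ := h'.eq_top_of_mem
    (map_snd_mem_invtSubmodule hX) (map_snd_mem_invtSubmodule hY) ⟨_, hmem, rfl⟩ hv₀'
  let πl := LinearMap.fst k M M' ∘ₗ N.subtype
  let πr := LinearMap.snd k M M' ∘ₗ N.subtype
  have hπl : Function.Bijective πl := by
    refine ⟨LinearMap.ker_eq_bot.mp (LinearMap.ker_eq_bot'.mpr ?_), LinearMap.range_eq_top.mp ?_⟩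
    · rintro ⟨⟨m, m'⟩, hn⟩ (rfl : m = 0)
      have : m' ∈ N.comap (LinearMap.inr k M M') := hn
      simp_all
    · rw [LinearMap.range_comp, Submodule.range_subtype, hfst]
  have hπr : Function.Bijective πr := by
    refine ⟨LinearMap.ker_eq_bot.mp (LinearMap.ker_eq_bot'.mpr ?_), LinearMap.range_eq_top.mp ?_⟩
    · rintro ⟨⟨m, m'⟩, hn⟩ (rfl : m' = 0)
      have : m ∈ N.comap (LinearMap.inl k M M') := hn
      simp_all
    · rw [LinearMap.range_comp, Submodule.range_subtype, hsnd]
  let e := (LinearEquiv.ofBijective πl hπl).symm ≪≫ₗ LinearEquiv.ofBijective πr hπr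
  have he {f : End k M} {f' : End k M'} (hN : N ∈ End.invtSubmodule (f.prodMap f')) (m : M) :
      e (f m) = f' (e m) := by
    obtain ⟨n, rfl⟩ := hπl.surjective m
    have hfn : f (πl n) = πl ⟨_, hN n.2⟩ := rfl
    simp only [e, hfn, LinearEquiv.trans_apply, LinearEquiv.ofBijective_symm_apply_apply,
      LinearEquiv.ofBijective_apply]
    rfl
  exact ⟨e, he hX, he hY⟩

theorem QCommute.exists_linearEquiv_of_mem_eigenspace {q μ : k} (hq : q ≠ 0)
    (hq' : ¬IsOfFinOrder q) {a b : ℕ} (hab : a.Coprime b) (hμ : μ ≠ 0)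
    (h : QCommute q X Y) (hs : IsSimplePair X Y) {v₀ : M} (hv₀ : v₀ ≠ 0)
    (hK : v₀ ∈ (X ^ a * Y ^ b).eigenspace μ)
    (h' : QCommute q X' Y') (hs' : IsSimplePair X' Y') {v₀' : M'} (hv₀' : v₀' ≠ 0)
    (hK' : v₀' ∈ (X' ^ a * Y' ^ b).eigenspace μ) :
    ∃ e : M ≃ₗ[k] M', (∀ m, e (X m) = X' (e m)) ∧ (∀ m, e (Y m) = Y' (e m)) := by
  let P := LinearMap.prodMapAlgHom k M M'
  have hP : QCommute q (P (X, X')) (P (Y, Y')) := by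
    rw [QCommute, ← map_mul, ← map_mul, ← map_smul, Prod.mk_mul_mk, Prod.mk_mul_mk, h.eq, h'.eq,
      Prod.smul_mk]
  have hKP : P (X, X') ^ a * P (Y, Y') ^ b = P (X ^ a * Y ^ b, X' ^ a * Y' ^ b) := by
    rw [← map_pow, ← map_pow, ← map_mul, Prod.pow_mk, Prod.pow_mk, Prod.mk_mul_mk]
  have hKP_apply (m : M) (m' : M') :
      (P (X, X') ^ a * P (Y, Y') ^ b) (m, m') = ((X ^ a * Y ^ b) m, (X' ^ a * Y' ^ b) m') := by
    rw [hKP]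
    rfl
  have hN := hP.monomialSpan_inf_eigenspace_le (w := (v₀, v₀')) hq hq' hab hμ <| by
    simp [hKP_apply, End.mem_eigenspace_iff.mp hK, End.mem_eigenspace_iff.mp hK']
  refine hs.exists_linearEquiv_of_submodule_prod hs' monomialSpan_mem_invtSubmodule_left
    (hP.monomialSpan_mem_invtSubmodule_right hq) hv₀ hv₀' self_mem_monomialSpan
    (fun hl => ?_) (fun hr => ?_)
  · obtain ⟨c, hc⟩ := Submodule.mem_span_singleton.mp <| hN ⟨hl, by
      simp [hKP_apply, End.mem_eigenspace_iff.mp hK]⟩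
    simp only [Prod.smul_mk, Prod.mk.injEq, smul_eq_zero] at hc
    obtain ⟨h₁, rfl | h₂⟩ := hc
    · exact hv₀ (by simpa using h₁.symm)
    · exact hv₀' h₂
  · obtain ⟨c, hc⟩ := Submodule.mem_span_singleton.mp <| hN ⟨hr, by
      simp [hKP_apply, End.mem_eigenspace_iff.mp hK']⟩
    simp only [Prod.smul_mk, Prod.mk.injEq, smul_eq_zero] at hc
    obtain ⟨rfl | h₁, h₂⟩ := hc
    · exact hv₀' (by simpa using h₂.symm)
    · exact hv₀ h₁

end Modules

theorem twist_of_simple_module_general (q : ℂ) (hq : q ≠ 0)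
    (hroot : ∀ k : ℕ, q ^ (k + 1) ≠ 1)
    (a b : ℕ) (hcop : Nat.Coprime a b)
    (c₁ c₂ : ℂ) (hc₁ : c₁ ≠ 0) (hc₂ : c₂ ≠ 0)
    (M : Type*) [AddCommGroup M] [Module ℂ M]
    (X Y : M →ₗ[ℂ] M) (hrel : X ∘ₗ Y = q • (Y ∘ₗ X))
    (hsimple : ∀ W : Submodule ℂ M,
      (∀ w ∈ W, X w ∈ W) → (∀ w ∈ W, Y w ∈ W) → W = ⊥ ∨ W = ⊤)
    (v₀ : M) (hv₀ : v₀ ≠ 0)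
    (hK : ((X ^ a) ∘ₗ (Y ^ b)) v₀ = v₀)
    (M' : Type*) [AddCommGroup M'] [Module ℂ M']
    (X' Y' : M' →ₗ[ℂ] M') (hrel' : X' ∘ₗ Y' = q • (Y' ∘ₗ X'))
    (hsimple' : ∀ W : Submodule ℂ M',
      (∀ w ∈ W, X' w ∈ W) → (∀ w ∈ W, Y' w ∈ W) → W = ⊥ ∨ W = ⊤)
    (v₀' : M') (hv₀' : v₀' ≠ 0)
    (hK' : ((X' ^ a) ∘ₗ (Y' ^ b)) v₀' = (c₁ ^ a * c₂ ^ b) • v₀') :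
    ∃ e : M ≃ₗ[ℂ] M',
      (∀ m : M, e ((c₁ • X) m) = X' (e m)) ∧ (∀ m : M, e ((c₂ • Y) m) = Y' (e m)) := by
  have hq' : ¬IsOfFinOrder q := fun hfin => by
    obtain ⟨n, hn, hqn⟩ := isOfFinOrder_iff_pow_eq_one.mp hfin
    exact hroot (n - 1) (by rwa [Nat.sub_add_cancel hn])
  have hKtwist : v₀ ∈ End.eigenspace ((c₁ • X) ^ a * (c₂ • Y) ^ b) (c₁ ^ a * c₂ ^ b) := by
    rw [End.mem_eigenspace_iff, smul_pow, smul_pow, smul_mul_smul_comm, LinearMap.smul_apply]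
    exact congrArg _ hK
  have hsimple_twist : IsSimplePair (c₁ • X) (c₂ • Y) :=
    IsSimplePair.smul (X := X) hsimple hc₁ hc₂
  exact QCommute.exists_linearEquiv_of_mem_eigenspace hq hq' hcop
    (mul_ne_zero (pow_ne_zero a hc₁) (pow_ne_zero b hc₂)) ((QCommute.smul_left hrel c₁).smul_right c₂)
    hsimple_twist hv₀ hKtwist hrel' hsimple' hv₀' (End.mem_eigenspace_iff.mpr hK')

/-- for `q` not a root of unity and `(c₁, c₂) ∈ (ℂ*)²`, the twist
of the simple `A_q(2)`-module `L_(a,b)[1]` by the automorphism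
`τ_c : x ↦ c₁x, y ↦ c₂y` is isomorphic to `L_(a,b)[c₁^a c₂^b]`.
Here `L_(a,b)[λ]` is any simple module with operators satisfying the quantum
plane relation and a (cyclic) eigenvector of `K = x^a y^b` of eigenvalue `λ`,
and the twisted action is `u ⋆ w = τ_c(u) w`, i.e. `x` acts by `c₁ • X` and
`y` by `c₂ • Y`. -/
theorem twist_of_simple_module (q : ℂ) (hq : q ≠ 0)
    (hroot : ∀ k : ℕ, q ^ (k + 1) ≠ 1)
    (a b : ℕ) (ha : 0 < a) (hb : 0 < b) (hcop : Nat.Coprime a b)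
    (c₁ c₂ : ℂ) (hc₁ : c₁ ≠ 0) (hc₂ : c₂ ≠ 0)
    (M : Type*) [AddCommGroup M] [Module ℂ M]
    (X Y : M →ₗ[ℂ] M) (hrel : X ∘ₗ Y = q • (Y ∘ₗ X))
    (hsimple : ∀ W : Submodule ℂ M,
      (∀ w ∈ W, X w ∈ W) → (∀ w ∈ W, Y w ∈ W) → W = ⊥ ∨ W = ⊤)
    (v₀ : M) (hv₀ : v₀ ≠ 0)
    (hK : ((X ^ a) ∘ₗ (Y ^ b)) v₀ = v₀)
    (M' : Type*) [AddCommGroup M'] [Module ℂ M']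
    (X' Y' : M' →ₗ[ℂ] M') (hrel' : X' ∘ₗ Y' = q • (Y' ∘ₗ X'))
    (hsimple' : ∀ W : Submodule ℂ M',
      (∀ w ∈ W, X' w ∈ W) → (∀ w ∈ W, Y' w ∈ W) → W = ⊥ ∨ W = ⊤)
    (v₀' : M') (hv₀' : v₀' ≠ 0)
    (hK' : ((X' ^ a) ∘ₗ (Y' ^ b)) v₀' = (c₁ ^ a * c₂ ^ b) • v₀') :
    ∃ e : M ≃ₗ[ℂ] M',
      (∀ m : M, e ((c₁ • X) m) = X' (e m)) ∧ (∀ m : M, e ((c₂ • Y) m) = Y' (e m)) :=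
  twist_of_simple_module_general q hq hroot a b hcop c₁ c₂ hc₁ hc₂ M X Y hrel hsimple v₀ hv₀ hK M'
    X' Y' hrel' hsimple' v₀' hv₀' hK'
end

section
/- Let $q$ not be a root of unity. Let $A = \begin{pmatrix} a_{11} & a_{12} \\ a_{21} & a_{22} \end{pmatrix} \in SL_2(\mathbb{Z})$, $\underline{c} \in (\mathbb{C}^*)^2$, and let $\tau = \tau_{\underline{c}} \tau_A$ be the corresponding automorphism of $\mathcal{L}_q(2)$. Twist the basic $\mathcal{L}_q(2)$-module $V = \mathbb{C}[t, t^{-1}]$ (where $x f(t) = f(qt)$, $y f(t) = t f(t)$) by $\tau$. Then the restriction of $V^\tau$ to the subalgebra $\mathcal{A}_q(2)$ is a simple $\mathcal{A}_q(2)$-module if and only if $a_{21} a_{22} < 0$. -/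
/-- The action of `x` on the twisted basic module `V^τ = ℂ[t,t⁻¹]`
(basis `t^m`, `m : ℤ`): `x ⋆ t^m = c₁^{a₁₁} c₂^{a₂₁} q^{a₁₁(m + a₂₁)} t^{m + a₂₁}`. -/
noncomputable def XtwistOp (q c₁ c₂ : ℂ) (a₁₁ a₂₁ : ℤ) :
    (ℤ →₀ ℂ) →ₗ[ℂ] (ℤ →₀ ℂ) :=
  Finsupp.lsum ℂ fun m =>
    (c₁ ^ a₁₁ * c₂ ^ a₂₁ * q ^ (a₁₁ * (m + a₂₁))) • Finsupp.lsingle (m + a₂₁)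

/-- The action of `y` on the twisted basic module:
`y ⋆ t^m = c₁^{a₁₂} c₂^{a₂₂} q^{a₁₂(m + a₂₂)} t^{m + a₂₂}`. -/
noncomputable def YtwistOp (q c₁ c₂ : ℂ) (a₁₂ a₂₂ : ℤ) :
    (ℤ →₀ ℂ) →ₗ[ℂ] (ℤ →₀ ℂ) :=
  Finsupp.lsum ℂ fun m =>
    (c₁ ^ a₁₂ * c₂ ^ a₂₂ * q ^ (a₁₂ * (m + a₂₂))) • Finsupp.lsingle (m + a₂₂)

/-
In the basis `t ^ m` of `V^τ`, `x` and `y` act as weighted shifts by `a₂₁` and `a₂₂`, with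
weights of the form `c q ^ (a₁₁ m)` and `c' q ^ (a₁₂ m)`.

If `a₂₁ a₂₂ ≥ 0`, both shift in the same direction, so the span of the `t ^ m` with `m ≥ 0`
(or with `m ≤ 0`) is a proper nonzero submodule.

If `a₂₁ a₂₂ < 0`, then `x ^ |a₂₂| y ^ |a₂₁|` has net shift zero and acts on `t ^ m` by the
scalar `C q ^ (± det A · m) = C q ^ (± m)`. As `q` is not a root of unity these eigenvalues are
pairwise distinct, so every nonzero submodule contains some `t ^ m₀`. Since `a₂₁, a₂₂` are
coprime of opposite signs, every integer is `u a₂₁ + v a₂₂` with `u, v ≥ 0`, and applying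
`x ^ u y ^ v` to `t ^ m₀` reaches every `t ^ n`.
-/

open Finsupp Function

theorem Module.End.pow_mem_invtSubmodule {R M : Type*} [Semiring R] [AddCommMonoid M]
    [Module R M] {f : Module.End R M} {p : Submodule R M} (hp : p ∈ f.invtSubmodule) (n : ℕ) :
    p ∈ (f ^ n).invtSubmodule := by
  rw [Module.End.mem_invtSubmodule_iff_mapsTo, Module.End.coe_pow]
  exact ((Module.End.mem_invtSubmodule_iff_mapsTo _).1 hp).iterate n

theorem zpow_injective_of_pow_succ_ne_one {K : Type*} [DivisionRing K] {q : K} (hq : q ≠ 0)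
    (hroot : ∀ k : ℕ, q ^ (k + 1) ≠ 1) : Injective fun n : ℤ => q ^ n := by
  have hu : ¬IsOfFinOrder (Units.mk0 q hq) := by
    rw [isOfFinOrder_iff_pow_eq_one]
    rintro ⟨n, hn, h⟩
    obtain ⟨k, rfl⟩ := Nat.exists_eq_succ_of_ne_zero hn.ne'
    exact hroot k (by simpa [Units.ext_iff] using h)
  intro m n h
  exact injective_zpow_iff_not_isOfFinOrder.2 hu (Units.ext (by simpa using h))

theorem Finsupp.supported_ne_bot_of_mem {ι R : Type*} [Semiring R] [Nontrivial R] {S : Set ι}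
    {i : ι} (hi : i ∈ S) : supported R R S ≠ ⊥ := fun h => by
  simpa [h] using single_mem_supported R (1 : R) hi

theorem Finsupp.supported_ne_top_of_notMem {ι R : Type*} [Semiring R] [Nontrivial R] {S : Set ι}
    {j : ι} (hj : j ∉ S) : supported R R S ≠ ⊤ := fun h => by
  have : single j (1 : R) ∈ supported R R S := h ▸ Submodule.mem_top
  simp [mem_supported, hj] at this

theorem abs_mul_add_abs_mul_of_mul_neg {a b : ℤ} (h : a * b < 0) : |b| * a + |a| * b = 0 := by
  rcases mul_neg_iff.1 h with ⟨ha, hb⟩ | ⟨ha, hb⟩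
  · rw [abs_of_neg hb, abs_of_pos ha]; ring
  · rw [abs_of_pos hb, abs_of_neg ha]; ring

theorem mul_abs_add_mul_abs_ne_zero {a₁₁ a₁₂ a₂₁ a₂₂ : ℤ} (hdet : a₁₁ * a₂₂ - a₁₂ * a₂₁ ≠ 0)
    (h : a₂₁ * a₂₂ < 0) : a₁₁ * |a₂₂| + a₁₂ * |a₂₁| ≠ 0 := by
  rcases mul_neg_iff.1 h with ⟨h₁, h₂⟩ | ⟨h₁, h₂⟩
  · rw [abs_of_neg h₂, abs_of_pos h₁]
    contrapose! hdet
    linarith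
  · rw [abs_of_pos h₂, abs_of_neg h₁]
    contrapose! hdet
    linarith

theorem exists_nat_mul_add_nat_mul_eq {a b : ℤ} (h : a * b < 0) (hcop : IsCoprime a b) (d : ℤ) :
    ∃ u v : ℕ, u * a + v * b = d := by
  obtain ⟨x, y, hxy⟩ := hcop
  -- Move `(d x, d y)` along the kernel direction `(|b|, |a|)` until both entries are nonnegative.
  set t := |d * x| + |d * y|
  have ha : 1 ≤ |a| := Int.one_le_abs (left_ne_zero_of_mul h.ne)
  have hb : 1 ≤ |b| := Int.one_le_abs (right_ne_zero_of_mul h.ne)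
  have htx : |d * x| ≤ t := le_add_of_nonneg_right (abs_nonneg _)
  have hty : |d * y| ≤ t := le_add_of_nonneg_left (abs_nonneg _)
  have ht : 0 ≤ t := (abs_nonneg _).trans htx
  obtain ⟨u, hu⟩ := Int.eq_ofNat_of_zero_le (a := d * x + t * |b|) (by
    linarith [mul_le_mul_of_nonneg_left hb ht, neg_abs_le (d * x)])
  obtain ⟨v, hv⟩ := Int.eq_ofNat_of_zero_le (a := d * y + t * |a|) (by
    linarith [mul_le_mul_of_nonneg_left ha ht, neg_abs_le (d * y)])
  refine ⟨u, v, ?_⟩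
  rw [← hu, ← hv]
  linear_combination d * hxy + t * abs_mul_add_abs_mul_of_mul_neg h

section Diagonal

variable {ι K : Type*} [Field K] {L : Module.End K (ι →₀ K)} {ev : ι → K}

theorem apply_eq_mul_of_diagonal (hL : ∀ i, L (single i 1) = single i (ev i)) (f : ι →₀ K) (i : ι) :
    L f i = ev i * f i := by
  induction f using Finsupp.induction_linear with
  | zero => simp
  | add f g hf hg => simp [hf, hg, mul_add]
  | single j r =>
    rw [← smul_single_one, map_smul, hL, Finsupp.smul_apply, Finsupp.smul_apply, smul_eq_mul,
      smul_eq_mul]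
    obtain rfl | h := eq_or_ne j i
    · simp [mul_comm]
    · simp [single_eq_of_ne' h]

theorem single_one_mem_of_diagonal (hL : ∀ i, L (single i 1) = single i (ev i))
    (hev : Injective ev) {W : Submodule K (ι →₀ K)} (hW : W ∈ L.invtSubmodule)
    {f : ι →₀ K} (hf : f ∈ W) {i : ι} (hi : f i ≠ 0) : single i 1 ∈ W := by
  classical
  induction hn : f.support.card using Nat.strong_induction_on generalizing f with
  | _ n ih =>
    by_cases hsupp : f.support ⊆ {i}
    · rw [support_subset_singleton.1 hsupp, ← smul_single_one, Submodule.smul_mem_iff _ hi] at hf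
      exact hf
    obtain ⟨j, hj, hji⟩ := Finset.not_subset.1 hsupp
    rw [Finset.mem_singleton] at hji
    -- `L - ev j` kills the `j`-th coordinate of `f` and keeps the `i`-th one.
    set g := L f - ev j • f
    have hg : ∀ k, g k = (ev k - ev j) * f k := fun k => by
      simp [g, apply_eq_mul_of_diagonal hL, sub_mul]
    have hgsupp : g.support ⊆ f.support.erase j := fun k hk => by
      rw [Finsupp.mem_support_iff, hg] at hk
      exact Finset.mem_erase.2
        ⟨fun h => hk (by simp [h]), Finsupp.mem_support_iff.2 (right_ne_zero_of_mul hk)⟩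
    refine ih _ ?_ (f := g) (sub_mem (hW hf) (W.smul_mem _ hf)) ?_ rfl
    · rw [← hn]
      exact (Finset.card_le_card hgsupp).trans_lt (Finset.card_erase_lt_of_mem hj)
    · rw [hg]
      exact mul_ne_zero (sub_ne_zero.2 (hev.ne (Ne.symm hji))) hi

theorem eq_top_of_forall_single_one_mem {W : Submodule K (ι →₀ K)}
    (h : ∀ i, single i 1 ∈ W) : W = ⊤ := by
  rw [eq_top_iff, ← (Finsupp.basisSingleOne (R := K) (ι := ι)).span_eq, Submodule.span_le]
  rintro _ ⟨i, rfl⟩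
  simpa using h i

end Diagonal

section WeightedShift

variable {R G : Type*} [CommSemiring R] [AddCommGroup G]

noncomputable def weightedShift (w : G → R) (a : G) : Module.End R (G →₀ R) :=
  lsum R fun m => w (m + a) • lsingle (m + a)

variable (w : G → R) (a : G)

theorem weightedShift_single (m : G) (r : R) :
    weightedShift w a (single m r) = single (m + a) (w (m + a) * r) := by
  simp [weightedShift]

theorem weightedShift_apply (f : G →₀ R) (k : G) :
    weightedShift w a f k = w k * f (k - a) := by
  induction f using Finsupp.induction_linear with
  | zero => simp
  | add f g hf hg => simp [hf, hg, mul_add]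
  | single m r =>
    rw [weightedShift_single]
    obtain rfl | h := eq_or_ne (m + a) k
    · simp
    · rw [single_eq_of_ne' h, single_eq_of_ne (by rintro rfl; simp at h), mul_zero]

theorem supported_mem_invtSubmodule_weightedShift {S : Set G} (hS : ∀ k ∈ S, k + a ∈ S) :
    supported R R S ∈ (weightedShift w a).invtSubmodule := by
  refine (Module.End.mem_invtSubmodule_iff_forall_mem_of_mem _).2 fun f hf => ?_
  rw [mem_supported'] at hf ⊢
  intro k hk
  rw [weightedShift_apply, hf (k - a) fun h => hk (by simpa using hS _ h), mul_zero]

end WeightedShift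

section ExponentialWeights

variable {K : Type*} [Field K] {q α β : K}

theorem weightedShift_exp_pow_single (hq : q ≠ 0) (hα : α ≠ 0) (b a : ℤ) (n : ℕ) :
    ∃ C ≠ 0, ∀ m : ℤ, (weightedShift (fun k => α * q ^ (b * k)) a ^ n) (single m 1) =
      single (m + n * a) (C * q ^ (b * n * m)) := by
  induction n with
  | zero => exact ⟨1, one_ne_zero, fun m => by simp⟩
  | succ n ih =>
    obtain ⟨C, hC, hpow⟩ := ih
    refine ⟨C * α * q ^ (b * (n + 1) * a), mul_ne_zero (mul_ne_zero hC hα) (zpow_ne_zero _ hq),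
      fun m => ?_⟩
    rw [pow_succ', Module.End.mul_apply, hpow, weightedShift_single]
    congr 1
    · push_cast; ring
    · rw [show b * (m + n * a + a) = b * (n + 1) * a + b * m by ring, zpow_add₀ hq,
        show b * ↑(n + 1) * m = b * m + b * n * m by push_cast; ring, zpow_add₀ hq]
      ring

theorem weightedShift_exp_pow_mul_pow_single (hq : q ≠ 0) (hα : α ≠ 0) (hβ : β ≠ 0)
    {b a b' a' : ℤ} {n n' : ℕ} (h : n * a + n' * a' = 0) :
    ∃ C ≠ 0, ∀ m : ℤ, (weightedShift (fun k => α * q ^ (b * k)) a ^ n *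
        weightedShift (fun k => β * q ^ (b' * k)) a' ^ n') (single m 1) =
      single m (C * q ^ ((b * n + b' * n') * m)) := by
  obtain ⟨C, hC, hpow⟩ := weightedShift_exp_pow_single hq hα b a n
  obtain ⟨C', hC', hpow'⟩ := weightedShift_exp_pow_single hq hβ b' a' n'
  refine ⟨C * C' * q ^ (b * n * (n' * a')), mul_ne_zero (mul_ne_zero hC hC') (zpow_ne_zero _ hq),
    fun m => ?_⟩
  rw [Module.End.mul_apply, hpow', ← smul_single_one, map_smul, hpow, smul_single,
    show m + n' * a' + n * a = m by linarith, smul_eq_mul,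
    show b * n * (m + n' * a') = b * n * (n' * a') + b * n * m by ring, zpow_add₀ hq,
    add_mul, zpow_add₀ hq]
  congr 1
  ring

theorem single_add_mul_mem_of_mem_invtSubmodule (hq : q ≠ 0) (hα : α ≠ 0) {b a : ℤ}
    {W : Submodule K (ℤ →₀ K)}
    (hW : W ∈ (weightedShift (fun k => α * q ^ (b * k)) a).invtSubmodule) (n : ℕ) {m : ℤ}
    (hm : single m 1 ∈ W) : single (m + n * a) 1 ∈ W := by
  obtain ⟨C, hC, hpow⟩ := weightedShift_exp_pow_single hq hα b a n
  have := Submodule.mem_comap.1 (Module.End.pow_mem_invtSubmodule hW n hm)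
  rwa [hpow, ← smul_single_one, Submodule.smul_mem_iff _ (mul_ne_zero hC (zpow_ne_zero _ hq))]
    at this

end ExponentialWeights

theorem exists_invtSubmodule_ne_bot_ne_top_of_mul_nonneg {R : Type*} [CommSemiring R]
    [Nontrivial R] (w w' : ℤ → R) {a a' : ℤ} (h : 0 ≤ a * a') :
    ∃ W : Submodule R (ℤ →₀ R), W ∈ (weightedShift w a).invtSubmodule ∧
      W ∈ (weightedShift w' a').invtSubmodule ∧ W ≠ ⊥ ∧ W ≠ ⊤ := by
  rcases mul_nonneg_iff.1 h with ⟨ha, ha'⟩ | ⟨ha, ha'⟩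
  · exact ⟨_, supported_mem_invtSubmodule_weightedShift w a (S := Set.Ici 0)
      fun k hk => add_nonneg hk ha, supported_mem_invtSubmodule_weightedShift w' a'
      fun k hk => add_nonneg hk ha', supported_ne_bot_of_mem Set.self_mem_Ici,
      supported_ne_top_of_notMem (j := -1) (by simp)⟩
  · exact ⟨_, supported_mem_invtSubmodule_weightedShift w a (S := Set.Iic 0)
      fun k hk => add_nonpos hk ha, supported_mem_invtSubmodule_weightedShift w' a'
      fun k hk => add_nonpos hk ha', supported_ne_bot_of_mem Set.self_mem_Iic,
      supported_ne_top_of_notMem (j := 1) (by simp)⟩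

theorem eq_top_of_mul_neg {K : Type*} [Field K] {q α β : K} (hq : q ≠ 0)
    (hinj : Injective fun n : ℤ => q ^ n) (hα : α ≠ 0) (hβ : β ≠ 0) {a₁₁ a₁₂ a₂₁ a₂₂ : ℤ}
    (hdet : a₁₁ * a₂₂ - a₁₂ * a₂₁ = 1) (hneg : a₂₁ * a₂₂ < 0) {W : Submodule K (ℤ →₀ K)}
    (hX : W ∈ (weightedShift (fun k => α * q ^ (a₁₁ * k)) a₂₁).invtSubmodule)
    (hY : W ∈ (weightedShift (fun k => β * q ^ (a₁₂ * k)) a₂₂).invtSubmodule) (hW : W ≠ ⊥) :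
    W = ⊤ := by
  obtain ⟨f, hf, hf0⟩ := Submodule.exists_mem_ne_zero_of_ne_bot hW
  obtain ⟨m₀, hm₀⟩ : ∃ m, f m ≠ 0 := Finsupp.ne_iff.1 hf0
  -- The two shifts raised to the powers `|a₂₂|`, `|a₂₁|` cancel, leaving a diagonal operator
  -- with eigenvalues `C q ^ (± m)`.
  obtain ⟨C, hC, hL⟩ := weightedShift_exp_pow_mul_pow_single (n := a₂₂.natAbs)
    (n' := a₂₁.natAbs) hq hα hβ (by simpa using abs_mul_add_abs_mul_of_mul_neg hneg)
  have hslope : a₁₁ * a₂₂.natAbs + a₁₂ * a₂₁.natAbs ≠ 0 := by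
    simpa using mul_abs_add_mul_abs_ne_zero (hdet ▸ one_ne_zero) hneg
  have hm₀W : single m₀ 1 ∈ W := single_one_mem_of_diagonal
    (ev := fun m => C * q ^ ((a₁₁ * a₂₂.natAbs + a₁₂ * a₂₁.natAbs) * m)) hL
    (fun m m' h => mul_left_cancel₀ hslope (hinj (mul_left_cancel₀ hC h)))
    (fun _ hg => Module.End.pow_mem_invtSubmodule hX _
      (Module.End.pow_mem_invtSubmodule hY _ hg)) hf hm₀
  refine eq_top_of_forall_single_one_mem fun n => ?_
  obtain ⟨u, v, huv⟩ :=
    exists_nat_mul_add_nat_mul_eq hneg ⟨-a₁₂, a₁₁, by linear_combination hdet⟩ (n - m₀)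
  have := single_add_mul_mem_of_mem_invtSubmodule hq hβ hY v
    (single_add_mul_mem_of_mem_invtSubmodule hq hα hX u hm₀W)
  rwa [show m₀ + u * a₂₁ + v * a₂₂ = n by linarith] at this

theorem XtwistOp_eq_weightedShift (q c₁ c₂ : ℂ) (a₁₁ a₂₁ : ℤ) :
    XtwistOp q c₁ c₂ a₁₁ a₂₁ = weightedShift (fun k => c₁ ^ a₁₁ * c₂ ^ a₂₁ * q ^ (a₁₁ * k)) a₂₁ :=
  rfl

theorem YtwistOp_eq_weightedShift (q c₁ c₂ : ℂ) (a₁₂ a₂₂ : ℤ) :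
    YtwistOp q c₁ c₂ a₁₂ a₂₂ = weightedShift (fun k => c₁ ^ a₁₂ * c₂ ^ a₂₂ * q ^ (a₁₂ * k)) a₂₂ :=
  rfl

/-- for `q` not a root of unity, `A ∈ SL₂(ℤ)`, `c ∈ (ℂ*)²`, the
restriction to `A_q(2)` of the basic `L_q(2)`-module twisted by `τ = τ_c τ_A`
is simple if and only if `a₂₁ a₂₂ < 0`. -/
theorem twisted_restriction_simple_iff (q : ℂ) (hq : q ≠ 0)
    (hroot : ∀ k : ℕ, q ^ (k + 1) ≠ 1)
    (c₁ c₂ : ℂ) (hc₁ : c₁ ≠ 0) (hc₂ : c₂ ≠ 0)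
    (a₁₁ a₁₂ a₂₁ a₂₂ : ℤ) (hdet : a₁₁ * a₂₂ - a₁₂ * a₂₁ = 1) :
    (∀ W : Submodule ℂ (ℤ →₀ ℂ),
        (∀ f ∈ W, XtwistOp q c₁ c₂ a₁₁ a₂₁ f ∈ W) →
        (∀ f ∈ W, YtwistOp q c₁ c₂ a₁₂ a₂₂ f ∈ W) → W = ⊥ ∨ W = ⊤)
      ↔ a₂₁ * a₂₂ < 0 := by
  simp only [XtwistOp_eq_weightedShift, YtwistOp_eq_weightedShift]
  refine ⟨fun hsimple => ?_, fun hneg W hX hY => ?_⟩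
  · by_contra hnonneg
    obtain ⟨W, hX, hY, hbot, htop⟩ :=
      exists_invtSubmodule_ne_bot_ne_top_of_mul_nonneg (R := ℂ) _ _ (not_lt.1 hnonneg)
    exact (hsimple W hX hY).elim hbot htop
  · have hc (a b : ℤ) : c₁ ^ a * c₂ ^ b ≠ 0 :=
      mul_ne_zero (zpow_ne_zero _ hc₁) (zpow_ne_zero _ hc₂)
    exact or_iff_not_imp_left.2 <| eq_top_of_mul_neg hq
      (zpow_injective_of_pow_succ_ne_one hq hroot) (hc _ _) (hc _ _) hdet hneg hX hY
end
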